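/- For every natural number n, ∑_{k=0}^{2n} (-2)^k · binom(2n,k) · H_k / (k+1) = 0. -/

import Mathlib

/-!
Absorbing `1/(k+1)` into the binomial coefficient and writing `H_k = H_{k+1} - 1/(k+1)` identifies
the sum, up to the factor `-2(2n+1)`, with `A(2n+1) - C(2n+1)`, where `A(N) = ∑ (-2)^j C(N,j) H_j`
and `C(N) = ∑ (-2)^j C(N,j) / j`. Pascal's rule gives first-order recurrences for `A` and `C` whose
inhomogeneous term `∑ (-2)^j C(N,j) / (j+1) = (1 - (-1)^(N+1)) / (2(N+1))` vanishes for odd `N`;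
hence `A - C` takes the same value at all odd `N`, namely its value `0` at `N = 1`.
-/

open Finset

/-- The `n`-th harmonic number `H_n = 1 + 1/2 + ⋯ + 1/n` (with `H_0 = 0`). -/
noncomputable def H (n : ℕ) : ℝ := ∑ i ∈ Finset.range n, 1 / ((i : ℝ) + 1)

lemma H_zero : H 0 = 0 := by simp [H]

lemma H_succ (n : ℕ) : H (n + 1) = H n + 1 / ((n : ℝ) + 1) :=
  sum_range_succ _ n

lemma Nat.cast_add_one_mul_choose_div (N k : ℕ) :
    ((N : ℝ) + 1) * N.choose k / ((k : ℝ) + 1) = (N + 1).choose (k + 1) := by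
  rw [div_eq_iff (by positivity)]
  exact_mod_cast Nat.add_one_mul_choose_eq N k

namespace BinomialHarmonic

variable (x : ℝ) (N : ℕ)

noncomputable def harmonicSum : ℝ := ∑ j ∈ range (N + 1), (N.choose j : ℝ) * (x ^ j * H j)

/-- The `j = 0` term vanishes because `x / 0 = 0`. -/
noncomputable def reciprocalSum : ℝ := ∑ j ∈ range (N + 1), (N.choose j : ℝ) * (x ^ j / j)

noncomputable def reciprocalSuccSum : ℝ :=
  ∑ j ∈ range (N + 1), (N.choose j : ℝ) * (x ^ j / ((j : ℝ) + 1))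

lemma mul_reciprocalSuccSum :
    x * ((N : ℝ) + 1) * reciprocalSuccSum x N = (1 + x) ^ (N + 1) - 1 := by
  have hterm : ∀ j ∈ range (N + 1),
      x * ((N : ℝ) + 1) * ((N.choose j : ℝ) * (x ^ j / ((j : ℝ) + 1)))
        = x ^ (j + 1) * 1 ^ (N + 1 - (j + 1)) * (N + 1).choose (j + 1) := by
    intro j _
    rw [← Nat.cast_add_one_mul_choose_div]
    ring
  rw [reciprocalSuccSum, mul_sum, sum_congr rfl hterm, add_comm 1 x, add_pow,
    sum_range_succ' _ (N + 1)]
  simp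

lemma harmonicSum_succ :
    harmonicSum x (N + 1) = (1 + x) * harmonicSum x N + x * reciprocalSuccSum x N := by
  rw [harmonicSum, sum_choose_succ_mul (fun j _ => x ^ j * H j), ← harmonicSum, one_add_mul,
    add_assoc]
  congr 1
  rw [harmonicSum, reciprocalSuccSum, mul_sum, mul_sum, ← sum_add_distrib]
  refine sum_congr rfl fun j _ => ?_
  rw [H_succ]
  ring

lemma reciprocalSum_succ :
    reciprocalSum x (N + 1) = reciprocalSum x N + x * reciprocalSuccSum x N := by
  rw [reciprocalSum, sum_choose_succ_mul (fun j _ => x ^ j / (j : ℝ)), ← reciprocalSum,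
    reciprocalSuccSum, mul_sum]
  refine congrArg _ (sum_congr rfl fun j _ => ?_)
  push_cast
  ring

lemma harmonicSum_succ_sub_reciprocalSum_succ :
    harmonicSum x (N + 1) - reciprocalSum x (N + 1)
      = x * ((N : ℝ) + 1) *
          ∑ k ∈ range (N + 1), x ^ k * (N.choose k : ℝ) * H k / ((k : ℝ) + 1) := by
  rw [harmonicSum, reciprocalSum, ← sum_sub_distrib, sum_range_succ' _ (N + 1), mul_sum]
  simp only [H_zero, Nat.cast_zero, div_zero, mul_zero, sub_zero, add_zero]
  refine sum_congr rfl fun k _ => ?_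
  rw [← Nat.cast_add_one_mul_choose_div, H_succ]
  push_cast
  ring

lemma reciprocalSuccSum_neg_two_of_odd {N : ℕ} (hN : Odd N) : reciprocalSuccSum (-2) N = 0 := by
  have h := mul_reciprocalSuccSum (-2) N
  rw [show (1 + -2 : ℝ) = -1 by norm_num, hN.add_one.neg_one_pow, sub_self] at h
  exact (mul_eq_zero.mp h).resolve_left (mul_ne_zero (by norm_num) (by positivity))

lemma harmonicSum_neg_two_two_mul_add_one (m : ℕ) :
    harmonicSum (-2) (2 * m + 1) = reciprocalSum (-2) (2 * m + 1) := by
  induction m with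
  | zero =>
    rw [harmonicSum_succ, reciprocalSum_succ]
    simp [harmonicSum, reciprocalSum, H_zero]
  | succ m ih =>
    rw [show 2 * (m + 1) + 1 = 2 * m + 1 + 1 + 1 by ring, harmonicSum_succ, harmonicSum_succ,
      reciprocalSum_succ, reciprocalSum_succ,
      reciprocalSuccSum_neg_two_of_odd (odd_two_mul_add_one m)]
    linear_combination ih

end BinomialHarmonic

theorem stmt_4 (n : ℕ) :
    ∑ k ∈ Finset.range (2 * n + 1),
      (-2 : ℝ) ^ k * ((2 * n).choose k : ℝ) * H k / ((k : ℝ) + 1) = 0 := by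
  have h := BinomialHarmonic.harmonicSum_succ_sub_reciprocalSum_succ (-2) (2 * n)
  rw [BinomialHarmonic.harmonicSum_neg_two_two_mul_add_one, sub_self] at h
  exact (mul_eq_zero.mp h.symm).resolve_left (mul_ne_zero (by norm_num) (by positivity))
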